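/- arXiv:2508.06812 — 2 statements merged into one kernel-verified Lean document; each statement's English description precedes it below -/
import Mathlib

section
/- Let p be an odd prime and k ≥ 1. The superpower graph of D_{p^k} is isomorphic to the graph obtained from the disjoint union of a complete graph on p^k − 1 vertices and a complete graph on p^k vertices by adding one universal vertex (the join with a single vertex). -/
def superpowerGraph (G : Type*) [Group G] : SimpleGraph G where
  Adj a b := a ≠ b ∧ (orderOf a ∣ orderOf b ∨ orderOf b ∣ orderOf a)
  symm := ⟨fun _ _ h => ⟨h.1.symm, h.2.symm⟩⟩
  loopless := ⟨fun _ h => h.1 rfl⟩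

noncomputable instance (G : Type*) [Group G] [DecidableEq G] :
    DecidableRel (superpowerGraph G).Adj :=
  fun _ _ => instDecidableAnd

def tagOf {a b : ℕ} : Option (Fin a ⊕ Fin b) → ℕ
  | none => 0
  | some (Sum.inl _) => 1
  | some (Sum.inr _) => 2

/-- The join of a single vertex with the disjoint union of `K_a` and `K_b`. -/
def oneJoinTwoCliques (a b : ℕ) : SimpleGraph (Option (Fin a ⊕ Fin b)) where
  Adj x y := x ≠ y ∧ (tagOf x = 0 ∨ tagOf y = 0 ∨ tagOf x = tagOf y)
  symm := by
    refine ⟨?_⟩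
    rintro x y ⟨h1, h2⟩
    refine ⟨h1.symm, ?_⟩
    rcases h2 with h | h | h
    · exact Or.inr (Or.inl h)
    · exact Or.inl h
    · exact Or.inr (Or.inr h.symm)
  loopless := ⟨fun x h => h.1 rfl⟩

/-!
In `D_n` with `n = p ^ k` odd, a rotation has order dividing `p ^ k`, a reflection has order `2`,
and only the identity has order `1`. Divisors of a prime power form a chain, so the rotations form a
clique; the reflections form a clique; and an odd order is comparable with `2` under divisibility
only if it is `1`, so the identity is the only rotation joined to a reflection.
-/

open DihedralGroup

theorem Nat.dvd_or_dvd_of_dvd_prime_pow {p k a b : ℕ} (hp : p.Prime) (ha : a ∣ p ^ k)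
    (hb : b ∣ p ^ k) : a ∣ b ∨ b ∣ a := by
  obtain ⟨i, -, rfl⟩ := (Nat.dvd_prime_pow hp).mp ha
  obtain ⟨j, -, rfl⟩ := (Nat.dvd_prime_pow hp).mp hb
  exact (le_total i j).imp (pow_dvd_pow p) (pow_dvd_pow p)

theorem Odd.dvd_two_or_two_dvd_iff {d : ℕ} (hd : Odd d) : d ∣ 2 ∨ 2 ∣ d ↔ d = 1 := by
  refine ⟨fun h => ?_, fun h => Or.inl (h ▸ one_dvd 2)⟩
  rcases h with h | h
  · rcases (Nat.dvd_prime Nat.prime_two).mp h with h | rfl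
    · exact h
    · exact absurd hd (by decide)
  · exact absurd h hd.not_two_dvd_nat

namespace DihedralGroup

section

variable {n : ℕ}

theorem orderOf_r_dvd (i : ZMod n) : orderOf (r i) ∣ n :=
  orderOf_dvd_of_pow_eq_one (by rw [r_pow, ZMod.natCast_self, mul_zero, r_zero])

theorem orderOf_r_eq_one_iff (i : ZMod n) : orderOf (r i) = 1 ↔ i = 0 := by
  rw [orderOf_eq_one_iff, one_def, r.injEq]

end

variable (n : ℕ) [NeZero n]

noncomputable def equivOneJoinTwoCliques : DihedralGroup n ≃ Option (Fin (n - 1) ⊕ Fin n) :=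
  let rot : {i : ZMod n // i ≠ 0} ≃ Fin (n - 1) :=
    Fintype.equivFinOfCardEq (by simp [Fintype.card_subtype_compl, ZMod.card])
  let refl : ZMod n ≃ Fin n := Fintype.equivFinOfCardEq (ZMod.card n)
  { toFun
      | r i => if h : i = 0 then none else some (.inl (rot ⟨i, h⟩))
      | sr i => some (.inr (refl i))
    invFun
      | none => r 0
      | some (.inl j) => r (rot.symm j)
      | some (.inr j) => sr (refl.symm j)
    left_inv := by
      rintro (i | i)
      · by_cases h : i = 0 <;> simp [h]
      · simp
    right_inv := by
      rintro (_ | j | j)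
      · simp
      · simp [(rot.symm j).2]
      · simp }

@[simp]
theorem tagOf_equivOneJoinTwoCliques_r (i : ZMod n) :
    tagOf (equivOneJoinTwoCliques n (r i)) = if i = 0 then 0 else 1 := by
  by_cases h : i = 0 <;> simp [equivOneJoinTwoCliques, h, tagOf, -r_zero]

@[simp]
theorem tagOf_equivOneJoinTwoCliques_sr (i : ZMod n) :
    tagOf (equivOneJoinTwoCliques n (sr i)) = 2 :=
  rfl

end DihedralGroup

theorem oneJoinTwoCliques_adj_iff {a b : ℕ} (x y : Option (Fin a ⊕ Fin b)) :
    (oneJoinTwoCliques a b).Adj x y ↔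
      x ≠ y ∧ (tagOf x = 0 ∨ tagOf y = 0 ∨ tagOf x = tagOf y) :=
  Iff.rfl

section SuperpowerDihedral

variable {p k n : ℕ}

theorem superpowerGraph_adj_iff {G : Type*} [Group G] (a b : G) :
    (superpowerGraph G).Adj a b ↔ a ≠ b ∧ (orderOf a ∣ orderOf b ∨ orderOf b ∣ orderOf a) :=
  Iff.rfl

theorem superpowerGraph_dihedral_adj_r_r (hp : p.Prime) (i j : ZMod (p ^ k)) :
    (superpowerGraph (DihedralGroup (p ^ k))).Adj (r i) (r j) ↔ i ≠ j := by
  rw [superpowerGraph_adj_iff, ne_eq, r.injEq, ← ne_eq, and_iff_left_iff_imp]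
  exact fun _ => Nat.dvd_or_dvd_of_dvd_prime_pow hp (orderOf_r_dvd i) (orderOf_r_dvd j)

theorem superpowerGraph_dihedral_adj_r_sr (hn : Odd n) (i j : ZMod n) :
    (superpowerGraph (DihedralGroup n)).Adj (r i) (sr j) ↔ i = 0 := by
  rw [superpowerGraph_adj_iff, orderOf_sr, (hn.of_dvd_nat (orderOf_r_dvd i)).dvd_two_or_two_dvd_iff,
    orderOf_r_eq_one_iff, and_iff_right nofun]

theorem superpowerGraph_dihedral_adj_sr_sr (i j : ZMod n) :
    (superpowerGraph (DihedralGroup n)).Adj (sr i) (sr j) ↔ i ≠ j := by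
  simp [superpowerGraph_adj_iff, orderOf_sr]

end SuperpowerDihedral

theorem stmt13_general (p k : ℕ) (hp : Fact p.Prime) (hp2 : p ≠ 2) :
    Nonempty
      (superpowerGraph (DihedralGroup (p ^ k)) ≃g
        oneJoinTwoCliques (p ^ k - 1) (p ^ k)) := by
  have : NeZero (p ^ k) := ⟨pow_ne_zero k hp.out.ne_zero⟩
  have hodd : Odd (p ^ k) := (hp.out.odd_of_ne_two hp2).pow
  refine ⟨⟨equivOneJoinTwoCliques (p ^ k), fun {x y} => ?_⟩⟩
  rw [oneJoinTwoCliques_adj_iff, (equivOneJoinTwoCliques _).injective.ne_iff]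
  rcases x with i | i <;> rcases y with j | j <;>
    simp only [tagOf_equivOneJoinTwoCliques_r, tagOf_equivOneJoinTwoCliques_sr]
  · rw [superpowerGraph_dihedral_adj_r_r hp.out, ne_eq, r.injEq]
    split_ifs <;> simp
  · rw [superpowerGraph_dihedral_adj_r_sr hodd, and_iff_right nofun]
    split_ifs with h <;> simp [h]
  · rw [SimpleGraph.adj_comm, superpowerGraph_dihedral_adj_r_sr hodd, and_iff_right nofun]
    split_ifs with h <;> simp [h]
  · rw [superpowerGraph_dihedral_adj_sr_sr, ne_eq, sr.injEq]
    simp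

theorem stmt13 (p k : ℕ) (hp : Fact p.Prime) (hp2 : p ≠ 2) (hk : 1 ≤ k) :
    Nonempty
      (superpowerGraph (DihedralGroup (p ^ k)) ≃g
        oneJoinTwoCliques (p ^ k - 1) (p ^ k)) :=
  stmt13_general p k hp hp2
end

section
/- Let p be an odd prime and G = D_p × D_p. Then 3p² − 1 is an eigenvalue of the signless Laplacian Q = D + A of the superpower graph S_G with multiplicity at least p² + 2p − 1, and 4p² − 2 is an eigenvalue of Q with multiplicity at least 2p² − 2p − 1. -/
open Finset Matrix Module

/-! If `o(u) = o(v)` then `u` and `v` are adjacent and have the same neighbours otherwise, so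
`Q (e_u - e_v) = (deg u - 1) (e_u - e_v)`. Over a set `S` of elements of one order these
differences span a space of dimension `|S| - 1`, and geometric multiplicity is a lower bound for
algebraic multiplicity. In `D_p × D_p` every order divides `2p`; counting solutions of `x² = 1`
and `x^p = 1` coordinatewise gives `p² + 2p` elements of order `2`, `p² - 1` of order `p` and
hence `2p² - 2p` of order `2p`. An element of order `2` is adjacent to everything except the
elements of order `p`, and one of order `2p` to everything, giving degrees `3p²` and `4p² - 1`. -/

theorem Matrix.card_sub_one_le_rootMultiplicity_charpoly {K n : Type*} [Field K] [Fintype n]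
    [DecidableEq n] (M : Matrix n n K) (μ : K) (S : Finset n)
    (hS : ∀ u ∈ S, ∀ v ∈ S, u ≠ v →
      M *ᵥ (Pi.single u 1 - Pi.single v 1) = μ • (Pi.single u 1 - Pi.single v 1)) :
    #S - 1 ≤ M.charpoly.rootMultiplicity μ := by
  classical
  have hspan : vectorSpan K (Pi.basisFun K n '' S) ≤ Module.End.eigenspace (toLin' M) μ := by
    rw [vectorSpan_def, Submodule.span_le]
    rintro _ ⟨_, ⟨u, hu, rfl⟩, _, ⟨v, hv, rfl⟩, rfl⟩
    rcases eq_or_ne u v with rfl | huv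
    · simp
    · simp only [SetLike.mem_coe, Module.End.mem_eigenspace_iff, toLin'_apply, Pi.basisFun_apply,
        vsub_eq_sub]
      exact hS u hu v hv huv
  rcases S.eq_empty_or_nonempty with rfl | hne
  · simp
  -- the basis vectors indexed by `S` are affinely independent, so their differences span
  -- a space of dimension `#S - 1`
  calc #S - 1 = finrank K (vectorSpan K (Pi.basisFun K n '' S)) := by
        rw [← coe_image, (Pi.basisFun K n).linearIndependent.affineIndependent
          |>.finrank_vectorSpan_image_finset (Nat.sub_one_add_one hne.card_pos.ne').symm]
    _ ≤ finrank K (Module.End.eigenspace (toLin' M) μ) := Submodule.finrank_mono hspan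
    _ ≤ M.charpoly.rootMultiplicity μ := by
      grw [LinearMap.finrank_eigenspace_le, Matrix.charpoly_toLin']

namespace SimpleGraph

variable {V : Type*} [Fintype V] [DecidableEq V] (G : SimpleGraph V) [DecidableRel G.Adj]

theorem degree_eq_of_adj_of_twins {u v : V} (huv : G.Adj u v)
    (htwin : ∀ w, w ≠ u → w ≠ v → (G.Adj w u ↔ G.Adj w v)) : G.degree u = G.degree v := by
  have hnbr : (G.neighborFinset u).erase v = (G.neighborFinset v).erase u := by
    ext w
    simp only [mem_erase, mem_neighborFinset]
    by_cases hwu : w = u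
    · subst hwu; simp
    by_cases hwv : w = v
    · subst hwv; simp
    simp only [hwu, hwv, G.adj_comm u, G.adj_comm v, htwin w hwu hwv, ne_eq, not_false_eq_true,
      true_and]
  rw [← card_neighborFinset_eq_degree, ← card_neighborFinset_eq_degree,
    ← card_erase_add_one (G.mem_neighborFinset _ _ |>.2 huv), hnbr,
    card_erase_add_one (G.mem_neighborFinset _ _ |>.2 huv.symm)]

theorem mulVec_single_sub_single_of_twins {R : Type*} [Ring R] {u v : V} (huv : G.Adj u v)
    (htwin : ∀ w, w ≠ u → w ≠ v → (G.Adj w u ↔ G.Adj w v)) :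
    (G.degMatrix R + G.adjMatrix R) *ᵥ (Pi.single u 1 - Pi.single v 1) =
      ((G.degree u : R) - 1) • (Pi.single u 1 - Pi.single v 1) := by
  have hdeg := G.degree_eq_of_adj_of_twins huv htwin
  ext w
  simp only [mulVec_sub, mulVec_single_one, Pi.sub_apply, Pi.smul_apply, col_apply,
    Matrix.add_apply, degMatrix, diagonal_apply, adjMatrix_apply]
  by_cases hwu : w = u
  · subst hwu; simp [huv, huv.ne]
  by_cases hwv : w = v
  · subst hwv; simp [hwu, huv.symm, hdeg]
  simp [hwu, hwv, htwin w hwu hwv]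

theorem card_sub_one_le_rootMultiplicity_of_twins {K : Type*} [Field K] (S : Finset V) (d : ℕ)
    (hS : ∀ u ∈ S, ∀ v ∈ S, u ≠ v →
      G.Adj u v ∧ ∀ w, w ≠ u → w ≠ v → (G.Adj w u ↔ G.Adj w v))
    (hd : ∀ u ∈ S, G.degree u = d) :
    #S - 1 ≤ (G.degMatrix K + G.adjMatrix K).charpoly.rootMultiplicity ((d : K) - 1) := by
  refine card_sub_one_le_rootMultiplicity_charpoly _ _ S fun u hu v hv huv => ?_
  obtain ⟨hadj, htwin⟩ := hS u hu v hv huv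
  rw [G.mulVec_single_sub_single_of_twins hadj htwin, hd u hu]

end SimpleGraph

section SuperpowerGraph

variable {G : Type*} [Group G] [Fintype G] [DecidableEq G]

theorem superpowerGraph_degree_eq (x : G) :
    (superpowerGraph G).degree x =
      #{y : G | orderOf x ∣ orderOf y ∨ orderOf y ∣ orderOf x} - 1 := by
  have hx : x ∈ ({y | orderOf x ∣ orderOf y ∨ orderOf y ∣ orderOf x} : Finset G) := by simp
  rw [← card_erase_of_mem hx, ← SimpleGraph.card_neighborFinset_eq_degree,
    SimpleGraph.neighborFinset_eq_filter]
  congr 1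
  ext y
  simp only [mem_erase, mem_filter, mem_univ, true_and]
  exact and_congr_left' ne_comm

theorem superpowerGraph_card_sub_one_le_rootMultiplicity {K : Type*} [Field K] (k d : ℕ)
    (hd : ∀ x : G, orderOf x = k → (superpowerGraph G).degree x = d) :
    #{x : G | orderOf x = k} - 1 ≤
      ((superpowerGraph G).degMatrix K + (superpowerGraph G).adjMatrix K).charpoly.rootMultiplicity
        ((d : K) - 1) := by
  refine SimpleGraph.card_sub_one_le_rootMultiplicity_of_twins _ _ d
    (fun u hu v hv huv => ⟨⟨huv, ?_⟩, fun w hwu hwv => ?_⟩) (fun u hu => hd u (by simpa using hu))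
  all_goals simp only [mem_filter, mem_univ, true_and] at hu hv
  · simp [hu, hv]
  · simp [superpowerGraph, hwu, hwv, hu, hv]

end SuperpowerGraph

theorem card_filter_pow_eq_one_prod {G H : Type*} [Monoid G] [Monoid H] [Fintype G] [Fintype H]
    [DecidableEq G] [DecidableEq H] (k : ℕ) :
    #{x : G × H | x ^ k = 1} = #{x : G | x ^ k = 1} * #{x : H | x ^ k = 1} := by
  rw [← card_product, ← filter_product, univ_product_univ]
  simp only [Prod.ext_iff, Prod.pow_fst, Prod.pow_snd, Prod.fst_one, Prod.snd_one]

theorem card_filter_orderOf_eq_prime {G : Type*} [Monoid G] [Fintype G] [DecidableEq G] {p : ℕ}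
    [Fact p.Prime] : #{x : G | orderOf x = p} = #{x : G | x ^ p = 1} - 1 := by
  have h1 : (1 : G) ∈ ({x | x ^ p = 1} : Finset G) := by simp
  rw [← card_erase_of_mem h1]
  congr 1
  ext x
  simp [orderOf_eq_prime_iff, and_comm]

theorem Nat.Prime.not_dvd_two_of_odd {p : ℕ} (hp : p.Prime) (hodd : Odd p) : ¬p ∣ 2 :=
  fun h => hodd.not_two_dvd_nat ((Nat.prime_dvd_prime_iff_eq hp Nat.prime_two).mp h ▸ dvd_rfl)

theorem Nat.Prime.dvd_two_or_eq_or_eq_two_mul {p d : ℕ} (hp : p.Prime) (h : d ∣ 2 * p) :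
    d ∣ 2 ∨ d = p ∨ d = 2 * p := by
  obtain ⟨a, b, ha, hb, rfl⟩ := Nat.dvd_mul.mp h
  rcases (Nat.dvd_prime hp).mp hb with rfl | rfl
  · simp [ha]
  · rcases (Nat.dvd_prime Nat.prime_two).mp ha with rfl | rfl <;> simp

namespace DihedralGroup

variable {n : ℕ}

theorem card_filter [NeZero n] (P : DihedralGroup n → Prop) [DecidablePred P] :
    #{x | P x} = #{i | P (r i)} + #{i | P (sr i)} := by
  simp only [Finset.card_filter]
  rw [← Fintype.sum_equiv equivSum.symm (fun s => if P (equivSum.symm s) then 1 else 0) _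
    (fun _ => rfl), Fintype.sum_sum_type]
  rfl

theorem sr_pow_eq_one_iff (i : ZMod n) {k : ℕ} : sr i ^ k = 1 ↔ 2 ∣ k := by
  rw [← orderOf_dvd_iff_pow_eq_one, orderOf_sr]

theorem r_sq_eq_one_iff (hn : Odd n) {i : ZMod n} : r i ^ 2 = 1 ↔ i = 0 := by
  have h2 : IsUnit (2 : ZMod n) := by
    exact_mod_cast (ZMod.isUnit_iff_coprime 2 n).mpr (Nat.coprime_two_left.mpr hn)
  rw [r_pow, one_def, r.injEq, Nat.cast_ofNat, h2.mul_left_eq_zero]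

theorem card_pow_self_eq_one [NeZero n] (hn : Odd n) : #{x : DihedralGroup n | x ^ n = 1} = n := by
  simp [card_filter, sr_pow_eq_one_iff, Nat.not_even_iff_odd.mpr hn, ← even_iff_two_dvd]

theorem card_sq_eq_one [NeZero n] (hn : Odd n) : #{x : DihedralGroup n | x ^ 2 = 1} = n + 1 := by
  simp only [card_filter, r_sq_eq_one_iff hn, sr_pow_eq_one_iff, dvd_refl]
  simp [filter_eq', add_comm]

theorem orderOf_dvd_two_mul (x : DihedralGroup n × DihedralGroup n) : orderOf x ∣ 2 * n := by
  refine (Monoid.order_dvd_exponent x).trans ?_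
  have h : lcm n 2 ∣ 2 * n := lcm_dvd (dvd_mul_left n 2) (dvd_mul_right 2 n)
  rw [Monoid.exponent_prod, exponent]
  exact lcm_dvd h h

end DihedralGroup

theorem card_dihedral_prod_sq_eq_one {p : ℕ} [NeZero p] (hodd : Odd p) :
    #{x : DihedralGroup p × DihedralGroup p | x ^ 2 = 1} = (p + 1) ^ 2 := by
  rw [card_filter_pow_eq_one_prod, DihedralGroup.card_sq_eq_one hodd, sq]

theorem card_dihedral_prod_orderOf_eq_two {p : ℕ} [NeZero p] (hodd : Odd p) :
    #{x : DihedralGroup p × DihedralGroup p | orderOf x = 2} = p ^ 2 + 2 * p := by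
  rw [card_filter_orderOf_eq_prime, card_dihedral_prod_sq_eq_one hodd]
  ring_nf
  omega

theorem superpowerGraph_dihedral_prod_degree_of_orderOf_eq_two_mul {p : ℕ} [NeZero p]
    (x : DihedralGroup p × DihedralGroup p) (hx : orderOf x = 2 * p) :
    (superpowerGraph (DihedralGroup p × DihedralGroup p)).degree x = 4 * p ^ 2 - 1 := by
  rw [superpowerGraph_degree_eq, hx,
    filter_true_of_mem fun y _ => Or.inr (DihedralGroup.orderOf_dvd_two_mul y), card_univ,
    Fintype.card_prod, DihedralGroup.card]
  ring_nf

section DihedralSquare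

variable {p : ℕ} [hp : Fact p.Prime] [NeZero p]

theorem card_dihedral_prod_orderOf_eq_self (hodd : Odd p) :
    #{x : DihedralGroup p × DihedralGroup p | orderOf x = p} = p ^ 2 - 1 := by
  rw [card_filter_orderOf_eq_prime, card_filter_pow_eq_one_prod,
    DihedralGroup.card_pow_self_eq_one hodd, sq]

theorem card_dihedral_prod_orderOf_ne_self (hodd : Odd p) :
    #{x : DihedralGroup p × DihedralGroup p | orderOf x ≠ p} = 3 * p ^ 2 + 1 := by
  have hpos : 1 ≤ p ^ 2 := Nat.one_le_pow _ _ (NeZero.pos p)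
  rw [filter_not, card_sdiff_of_subset (filter_subset _ _), card_univ, Fintype.card_prod,
    DihedralGroup.card, card_dihedral_prod_orderOf_eq_self hodd]
  ring_nf
  omega

theorem dihedral_prod_orderOf_ne_self_iff (hodd : Odd p) (x : DihedralGroup p × DihedralGroup p) :
    orderOf x ≠ p ↔ orderOf x ∣ 2 ∨ orderOf x = 2 * p := by
  constructor
  · intro hx
    rcases hp.out.dvd_two_or_eq_or_eq_two_mul (DihedralGroup.orderOf_dvd_two_mul x) with h | h | h
    exacts [Or.inl h, absurd h hx, Or.inr h]
  · rintro (h | h) hx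
    · exact hp.out.not_dvd_two_of_odd hodd (hx ▸ h)
    · have := NeZero.pos p
      omega

theorem card_dihedral_prod_orderOf_eq_two_mul (hodd : Odd p) :
    #{x : DihedralGroup p × DihedralGroup p | orderOf x = 2 * p} = 2 * p ^ 2 - 2 * p := by
  have hdisj : Disjoint ({x | x ^ 2 = 1} : Finset (DihedralGroup p × DihedralGroup p))
      ({x | orderOf x = 2 * p} : Finset (DihedralGroup p × DihedralGroup p)) := by
    refine disjoint_filter.2 fun x _ hx h2p => ?_
    have := Nat.le_of_dvd two_pos (h2p ▸ orderOf_dvd_of_pow_eq_one hx)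
    have := hp.out.two_le
    omega
  have hsplit : #{x : DihedralGroup p × DihedralGroup p | orderOf x ≠ p} =
      #{x : DihedralGroup p × DihedralGroup p | x ^ 2 = 1} +
        #{x : DihedralGroup p × DihedralGroup p | orderOf x = 2 * p} := by
    rw [← card_union_of_disjoint hdisj, ← filter_or]
    refine congrArg card (filter_congr fun x _ => ?_)
    rw [dihedral_prod_orderOf_ne_self_iff hodd, orderOf_dvd_iff_pow_eq_one]
  rw [card_dihedral_prod_orderOf_ne_self hodd, card_dihedral_prod_sq_eq_one hodd] at hsplit
  ring_nf at hsplit ⊢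
  omega

theorem superpowerGraph_dihedral_prod_degree_of_orderOf_eq_two (hodd : Odd p)
    (x : DihedralGroup p × DihedralGroup p) (hx : orderOf x = 2) :
    (superpowerGraph (DihedralGroup p × DihedralGroup p)).degree x = 3 * p ^ 2 := by
  have hnbr : #{y : DihedralGroup p × DihedralGroup p | 2 ∣ orderOf y ∨ orderOf y ∣ 2} =
      #{y : DihedralGroup p × DihedralGroup p | orderOf y ≠ p} := by
    refine congrArg card (filter_congr fun y _ => ⟨?_, fun hy => ?_⟩)
    · rintro h hy
      rw [hy] at h
      exact h.elim hodd.not_two_dvd_nat (hp.out.not_dvd_two_of_odd hodd)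
    · rcases (dihedral_prod_orderOf_ne_self_iff hodd y).mp hy with h | h
      exacts [Or.inr h, Or.inl (h ▸ dvd_mul_right 2 p)]
  rw [superpowerGraph_degree_eq, hx, hnbr, card_dihedral_prod_orderOf_ne_self hodd,
    Nat.add_sub_cancel]

end DihedralSquare

theorem stmt19 (p : ℕ) (hp : Fact p.Prime) (hp2 : p ≠ 2) :
    p ^ 2 + 2 * p - 1 ≤
      Polynomial.rootMultiplicity (3 * (p : ℝ) ^ 2 - 1)
        (Matrix.charpoly
          (Matrix.diagonal
              (fun v : DihedralGroup p × DihedralGroup p =>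
                ((superpowerGraph _).degree v : ℝ)) +
            (superpowerGraph (DihedralGroup p × DihedralGroup p)).adjMatrix ℝ)) ∧
    2 * p ^ 2 - 2 * p - 1 ≤
      Polynomial.rootMultiplicity (4 * (p : ℝ) ^ 2 - 2)
        (Matrix.charpoly
          (Matrix.diagonal
              (fun v : DihedralGroup p × DihedralGroup p =>
                ((superpowerGraph _).degree v : ℝ)) +
            (superpowerGraph (DihedralGroup p × DihedralGroup p)).adjMatrix ℝ)) := by
  have hodd : Odd p := hp.out.odd_of_ne_two hp2
  have : NeZero p := ⟨hp.out.ne_zero⟩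
  constructor
  · have h := superpowerGraph_card_sub_one_le_rootMultiplicity (K := ℝ) 2 (3 * p ^ 2)
      (superpowerGraph_dihedral_prod_degree_of_orderOf_eq_two hodd)
    rw [card_dihedral_prod_orderOf_eq_two hodd, Nat.cast_mul, Nat.cast_pow, Nat.cast_ofNat] at h
    exact h
  · have h := superpowerGraph_card_sub_one_le_rootMultiplicity (K := ℝ) (2 * p) (4 * p ^ 2 - 1)
      superpowerGraph_dihedral_prod_degree_of_orderOf_eq_two_mul
    have hμ : ((4 * p ^ 2 - 1 : ℕ) : ℝ) - 1 = 4 * (p : ℝ) ^ 2 - 2 := by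
      have hpos : 1 ≤ 4 * p ^ 2 := by nlinarith [NeZero.pos p]
      push_cast [Nat.cast_sub hpos]
      ring
    rw [card_dihedral_prod_orderOf_eq_two_mul hodd, hμ] at h
    exact h
end
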